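/- An inverse semigroup S with zero is congruence-free if and only if it is fundamental, 0-simple, and its semilattice of idempotents E(S) is 0-disjunctive. -/

import Mathlib

/-- An inverse semigroup with zero. -/
class InverseSemigroup0 (S : Type*) extends Semigroup S, Zero S, Star S where
  zero_mul : ∀ s : S, 0 * s = 0
  mul_zero : ∀ s : S, s * 0 = 0
  mul_star_mul_self : ∀ s : S, s * star s * s = s
  star_mul_self_star : ∀ s : S, star s * s * star s = star s
  star_unique : ∀ s t : S, s * t * s = s → t * s * t = t → t = star s

/-- The natural partial order on an inverse semigroup. -/
def NatLe {S : Type*} [InverseSemigroup0 S] (a b : S) : Prop := a = b * star a * a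

/-- `S` is fundamental: the centralizer of the idempotents consists of idempotents. -/
def Fundamental (S : Type*) [InverseSemigroup0 S] : Prop :=
  ∀ s : S, (∀ e : S, IsIdempotentElem e → s * e = e * s) → IsIdempotentElem s

/-- The semilattice of idempotents of `S` is 0-disjunctive. -/
def ZeroDisjunctive (S : Type*) [InverseSemigroup0 S] : Prop :=
  ∀ e f : S, IsIdempotentElem e → IsIdempotentElem f → f ≠ 0 → NatLe f e → f ≠ e →
    ∃ g : S, g ≠ 0 ∧ IsIdempotentElem g ∧ NatLe g e ∧ f * g = 0

/-- `S` is 0-simple: it is non-trivial and `S s S = S` for every `s ≠ 0`. -/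
def ZeroSimple (S : Type*) [InverseSemigroup0 S] : Prop :=
  (∃ s : S, s ≠ 0) ∧ ∀ s : S, s ≠ 0 → ∀ t : S, ∃ a b : S, a * s * b = t

/-- `S` (non-trivial, with zero) is congruence-free: its only congruences are the
equality relation and the universal relation. -/
def CongruenceFree (S : Type*) [InverseSemigroup0 S] : Prop :=
  (∃ s : S, s ≠ 0) ∧
    ∀ r : S → S → Prop, Equivalence r →
      (∀ a b c d : S, r a b → r c d → r (a * c) (b * d)) →
      (∀ a b : S, r a b ↔ a = b) ∨ (∀ a b : S, r a b)

/-!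
Each of the three properties is forced by a congruence that cannot be universal, as it separates
`0` from a non-zero element. `S` is fundamental iff the congruence `μ` (`a μ b` iff
`a⁻¹ e a = b⁻¹ e b` for all idempotents `e`) is equality. The Rees congruence of the ideal `S s S`
relates `s ≠ 0` to `0`, so it is universal and `S s S = S`. If `0 ≠ f < e` admitted no `0 ≠ g ≤ e`
with `f g = 0`, then `e` and `f` would be related by the congruence `a ~ b` iff
`x a y = 0 ↔ x b y = 0` for all `x, y`.

Conversely, every congruence respects inverses, so if `a ≠ b` are related and `S` is fundamental,
some conjugates `a⁻¹ e a ≠ b⁻¹ e b` are related idempotents. Multiplying them gives related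
idempotents `f < e`; 0-disjunctivity yields `0 ≠ g ≤ e` with `f g = 0`, so `g` is related to `0`,
and 0-simplicity spreads this to all of `S`.
-/

section Semigroup

variable {T : Type*} [Semigroup T]

theorem inverse_unique_of_idempotents_commute
    (hE : ∀ p q : T, IsIdempotentElem p → IsIdempotentElem q → Commute p q) {x y z : T}
    (hxy : x * y * x = x) (hyx : y * x * y = y) (hxz : x * z * x = x) (hzx : z * x * z = z) :
    y = z := by
  have idem_left {u v : T} (h : u * v * u = u) : IsIdempotentElem (u * v) := by
    rw [IsIdempotentElem, ← mul_assoc, h]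
  have idem_right {u v : T} (h : u * v * u = u) : IsIdempotentElem (v * u) := by
    rw [IsIdempotentElem, mul_assoc, ← mul_assoc u, h]
  have hy : y = z * x * y :=
    calc y = y * (x * z * x) * y := by rw [hxz, hyx]
      _ = y * x * (z * x) * y := by simp only [mul_assoc]
      _ = z * x * (y * x) * y := by rw [(hE _ _ (idem_right hxy) (idem_right hxz)).eq]
      _ = z * x * (y * x * y) := by simp only [mul_assoc]
      _ = z * x * y := by rw [hyx]
  have hz : z = z * x * y :=
    calc z = z * (x * y * x) * z := by rw [hxy, hzx]
      _ = z * (x * y * (x * z)) := by simp only [mul_assoc]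
      _ = z * (x * z * (x * y)) := by rw [(hE _ _ (idem_left hxy) (idem_left hxz)).eq]
      _ = z * x * z * x * y := by simp only [mul_assoc]
      _ = z * x * y := by rw [hzx]
  exact hy.trans hz.symm

def reesCon (I : Set T) (hl : ∀ x y, y ∈ I → x * y ∈ I) (hr : ∀ x y, x ∈ I → x * y ∈ I) :
    Con T where
  r a b := a = b ∨ (a ∈ I ∧ b ∈ I)
  iseqv :=
    { refl _ := Or.inl rfl
      symm := by rintro _ _ (rfl | ⟨ha, hb⟩); exacts [Or.inl rfl, Or.inr ⟨hb, ha⟩]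
      trans := by
        rintro _ _ _ (rfl | ⟨ha, hb⟩) (rfl | ⟨hb', hc⟩)
        exacts [Or.inl rfl, Or.inr ⟨hb', hc⟩, Or.inr ⟨ha, hb⟩, Or.inr ⟨ha, hc⟩] }
  mul' := by
    rintro a _ c _ (rfl | ⟨ha, hb⟩) (rfl | ⟨hc, hd⟩)
    exacts [Or.inl rfl, Or.inr ⟨hl _ _ hc, hl _ _ hd⟩, Or.inr ⟨hr _ _ ha, hr _ _ hb⟩,
      Or.inr ⟨hr _ _ ha, hr _ _ hb⟩]

def syntacticCon (Z : Set T) : Con T where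
  r a b := ∀ x y, x * a * y ∈ Z ↔ x * b * y ∈ Z
  iseqv :=
    ⟨fun _ _ _ => Iff.rfl, fun h x y => (h x y).symm, fun h h' x y => (h x y).trans (h' x y)⟩
  mul' {a b c d} h h' x y := by
    calc x * (a * c) * y ∈ Z ↔ x * a * (c * y) ∈ Z := by simp only [mul_assoc]
      _ ↔ x * b * c * y ∈ Z := by rw [h x (c * y), mul_assoc (x * b)]
      _ ↔ x * (b * d) * y ∈ Z := by rw [h' (x * b) y, mul_assoc x b]

end Semigroup

namespace InverseSemigroup0

variable {S : Type*} [InverseSemigroup0 S]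

instance : SemigroupWithZero S := { ‹InverseSemigroup0 S› with }

theorem _root_.IsIdempotentElem.star_eq {e : S} (he : IsIdempotentElem e) : star e = e := by
  have h : e * e * e = e := by rw [he.eq, he.eq]
  exact (star_unique e e h h).symm

protected theorem star_star (s : S) : star (star s) = s :=
  (star_unique _ _ (star_mul_self_star s) (mul_star_mul_self s)).symm

theorem isIdempotentElem_star_mul_self (s : S) : IsIdempotentElem (star s * s) := by
  rw [IsIdempotentElem, ← mul_assoc, star_mul_self_star]

theorem isIdempotentElem_mul_star_self (s : S) : IsIdempotentElem (s * star s) := by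
  rw [IsIdempotentElem, ← mul_assoc, mul_star_mul_self]

theorem isIdempotentElem_mul {e f : S} (he : IsIdempotentElem e) (hf : IsIdempotentElem f) :
    IsIdempotentElem (e * f) := by
  set x := star (e * f)
  -- `f x e` is an inverse of `e f`, so it is `x`; hence `x` is idempotent, and so is `e f = x⁻¹`.
  have hfxe : f * x * e = x := by
    refine star_unique _ _ ?_ ?_
    · simpa only [mul_assoc, he.mul_self_mul, hf.mul_self_mul] using mul_star_mul_self (e * f)
    · calc f * x * e * (e * f) * (f * x * e) = f * (x * (e * f) * x) * e := by
            simp only [mul_assoc, he.mul_self_mul, hf.mul_self_mul]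
        _ = f * x * e := by rw [star_mul_self_star]
  have hx : IsIdempotentElem x := by
    calc x * x = f * x * e * (f * x * e) := by rw [hfxe]
      _ = f * (x * (e * f) * x) * e := by simp only [mul_assoc]
      _ = x := by rw [star_mul_self_star, hfxe]
  rwa [← InverseSemigroup0.star_star (e * f), hx.star_eq]

theorem _root_.IsIdempotentElem.commute {e f : S} (he : IsIdempotentElem e)
    (hf : IsIdempotentElem f) : Commute e f := by
  have hef := isIdempotentElem_mul he hf
  have hfe := isIdempotentElem_mul hf he
  have h : f * e = star (e * f) := by
    refine star_unique _ _ ?_ ?_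
    · simpa only [mul_assoc, he.mul_self_mul, hf.mul_self_mul] using hef.eq
    · simpa only [mul_assoc, he.mul_self_mul, hf.mul_self_mul] using hfe.eq
  rw [Commute, SemiconjBy, h, hef.star_eq]

protected theorem star_mul (a b : S) : star (a * b) = star b * star a := by
  have hc := (isIdempotentElem_mul_star_self b).commute (isIdempotentElem_star_mul_self a)
  refine (star_unique _ _ ?_ ?_).symm
  · calc a * b * (star b * star a) * (a * b) = a * ((b * star b) * (star a * a)) * b := by
          simp only [mul_assoc]
      _ = a * star a * a * (b * star b * b) := by rw [hc.eq]; simp only [mul_assoc]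
      _ = a * b := by rw [mul_star_mul_self, mul_star_mul_self]
  · calc star b * star a * (a * b) * (star b * star a)
          = star b * ((star a * a) * (b * star b)) * star a := by simp only [mul_assoc]
      _ = star b * b * star b * (star a * a * star a) := by rw [← hc.eq]; simp only [mul_assoc]
      _ = star b * star a := by rw [star_mul_self_star, star_mul_self_star]

instance : StarMul S where
  star_involutive := InverseSemigroup0.star_star
  star_mul := InverseSemigroup0.star_mul

theorem _root_.IsIdempotentElem.conj {e : S} (he : IsIdempotentElem e) (s : S) :
    IsIdempotentElem (star s * e * s) := by
  have hc := he.commute (isIdempotentElem_mul_star_self s)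
  calc star s * e * s * (star s * e * s) = star s * (e * (s * star s)) * (e * s) := by
        simp only [mul_assoc]
    _ = star s * s * star s * (e * (e * s)) := by rw [hc.eq]; simp only [mul_assoc]
    _ = star s * e * s := by rw [star_mul_self_star, he.mul_self_mul, mul_assoc]

theorem natLe_iff_mul_eq {e f : S} (hf : IsIdempotentElem f) : NatLe f e ↔ e * f = f := by
  rw [NatLe, hf.star_eq, hf.mul_mul_self, eq_comm]

theorem star_mul_self_eq_zero_iff {s : S} : star s * s = 0 ↔ s = 0 := by
  constructor
  · intro h
    rw [← mul_star_mul_self s, mul_assoc, h, mul_zero]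
  · rintro rfl
    exact mul_zero _

theorem mul_mul_eq_zero_iff {e : S} (he : IsIdempotentElem e) (x y : S) :
    x * e * y = 0 ↔ e * (star x * x * (y * star y)) = 0 := by
  have key : star x * (x * e * y) * star y = e * (star x * x * (y * star y)) := by
    have hc := (isIdempotentElem_star_mul_self x).commute he
    calc star x * (x * e * y) * star y = star x * x * e * (y * star y) := by simp only [mul_assoc]
      _ = e * (star x * x * (y * star y)) := by rw [hc.eq]; simp only [mul_assoc]
  constructor
  · intro h
    rw [← key, h, mul_zero, zero_mul]
  · intro h
    calc x * e * y = x * star x * x * e * (y * star y * y) := by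
          rw [mul_star_mul_self, mul_star_mul_self]
      _ = x * (star x * (x * e * y) * star y) * y := by simp only [mul_assoc]
      _ = 0 := by rw [key, h, mul_zero, zero_mul]

theorem _root_.Con.exists_isIdempotentElem_coe_eq (c : Con S) {q : c.Quotient}
    (hq : IsIdempotentElem q) : ∃ e : S, IsIdempotentElem e ∧ (e : c.Quotient) = q := by
  induction q using Con.induction_on with | H x => ?_
  have hx : ((x * x : S) : c.Quotient) = x := hq
  refine ⟨x * star (x * x) * x, ?_, ?_⟩
  · calc x * star (x * x) * x * (x * star (x * x) * x)
          = x * (star (x * x) * (x * x) * star (x * x)) * x := by simp only [mul_assoc]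
      _ = x * star (x * x) * x := by rw [star_mul_self_star]
  · calc ((x * star (x * x) * x : S) : c.Quotient)
          = ((x * x : S) : c.Quotient) * (star (x * x) : S) * ((x * x : S) : c.Quotient) := by
            rw [hx]; rfl
      _ = x := by rw [← Con.coe_mul, ← Con.coe_mul, mul_star_mul_self, hx]

theorem _root_.Con.commute_of_isIdempotentElem (c : Con S) {p q : c.Quotient}
    (hp : IsIdempotentElem p) (hq : IsIdempotentElem q) : Commute p q := by
  obtain ⟨e, he, rfl⟩ := c.exists_isIdempotentElem_coe_eq hp
  obtain ⟨f, hf, rfl⟩ := c.exists_isIdempotentElem_coe_eq hq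
  rw [Commute, SemiconjBy, ← Con.coe_mul, ← Con.coe_mul, (he.commute hf).eq]

-- In `S / c` idempotents commute, so inverses are unique there, and `c a b` makes the
-- images of `a⁻¹` and `b⁻¹` both inverses of the image of `a`.
protected theorem _root_.Con.star (c : Con S) {a b : S} (h : c a b) : c (star a) (star b) := by
  rw [← c.eq]
  have hab : (a : c.Quotient) = b := c.eq.2 h
  refine inverse_unique_of_idempotents_commute (fun _ _ => c.commute_of_isIdempotentElem)
    (x := (a : c.Quotient)) ?_ ?_ ?_ ?_
  · rw [← Con.coe_mul, ← Con.coe_mul, mul_star_mul_self]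
  · rw [← Con.coe_mul, ← Con.coe_mul, star_mul_self_star]
  · rw [hab, ← Con.coe_mul, ← Con.coe_mul, mul_star_mul_self]
  · rw [hab, ← Con.coe_mul, ← Con.coe_mul, star_mul_self_star]

-- The congruence `μ`, the kernel of the Munn representation.
def munnCon (S : Type*) [InverseSemigroup0 S] : Con S where
  r a b := ∀ e : S, IsIdempotentElem e → star a * e * a = star b * e * b
  iseqv :=
    ⟨fun _ _ _ => rfl, fun h e he => (h e he).symm, fun h h' e he => (h e he).trans (h' e he)⟩
  mul' {a b c d} h h' e he :=
    calc star (a * c) * e * (a * c) = star c * (star a * e * a) * c := by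
          simp only [star_mul, mul_assoc]
      _ = star d * (star a * e * a) * d := h' _ (he.conj a)
      _ = star (b * d) * e * (b * d) := by rw [h e he]; simp only [star_mul, mul_assoc]

theorem eq_of_munnCon_of_isIdempotentElem {e f : S} (he : IsIdempotentElem e)
    (hf : IsIdempotentElem f) (h : munnCon S e f) : e = f :=
  have hc := (he.commute hf).eq
  calc e = star e * e * e := by rw [he.star_eq, he.eq, he.eq]
    _ = star f * e * f := h e he
    _ = e * f := by rw [hf.star_eq, ← hc, mul_assoc, hf.eq]
    _ = star e * f * e := by rw [he.star_eq, hc, mul_assoc, he.eq]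
    _ = star f * f * f := h f hf
    _ = f := by rw [hf.star_eq, hf.eq, hf.eq]

theorem munnCon_ne_top {s : S} (hs : s ≠ 0) : munnCon S ≠ ⊤ := fun h =>
  hs <| star_mul_self_eq_zero_iff.1 <| Eq.symm <|
    eq_of_munnCon_of_isIdempotentElem .zero (isIdempotentElem_star_mul_self s)
      (h ▸ trivial)

theorem commute_mul_star_of_munnCon {a b e : S} (h : munnCon S a b) (he : IsIdempotentElem e) :
    Commute (a * star b) e :=
  calc a * star b * e = a * (star b * b * star b) * e := by rw [star_mul_self_star]
    _ = a * star b * (e * (b * star b)) := by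
        rw [← ((isIdempotentElem_mul_star_self b).commute he).eq]; simp only [mul_assoc]
    _ = a * (star b * e * b) * star b := by simp only [mul_assoc]
    _ = a * (star a * e * a) * star b := by rw [h e he]
    _ = a * star a * e * (a * star b) := by simp only [mul_assoc]
    _ = e * (a * star a) * (a * star b) := by
        rw [((isIdempotentElem_mul_star_self a).commute he).eq]
    _ = e * (a * star a * a * star b) := by simp only [mul_assoc]
    _ = e * (a * star b) := by rw [mul_star_mul_self]

theorem eq_of_munnCon (hF : Fundamental S) {a b : S} (h : munnCon S a b) : a = b := by
  have hs : IsIdempotentElem (a * star b) :=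
    hF _ fun e he => (commute_mul_star_of_munnCon h he).eq
  have hd : star a * a = star b * b :=
    eq_of_munnCon_of_isIdempotentElem (isIdempotentElem_star_mul_self a)
      (isIdempotentElem_star_mul_self b) ((munnCon S).mul ((munnCon S).star h) h)
  have ha : a = a * star b * b := by rw [mul_assoc, ← hd, ← mul_assoc, mul_star_mul_self]
  have hb : b = a * star b * a :=
    calc b = b * star a * a := by rw [mul_assoc, hd, ← mul_assoc, mul_star_mul_self]
      _ = a * star b * a := by rw [← hs.star_eq, star_mul, star_star]
  calc a = a * star b * (a * star b * a) := by rw [← hb, ← ha]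
    _ = a * star b * a := by rw [← mul_assoc, hs.eq]
    _ = b := hb.symm

theorem munnCon_star_mul_self {s : S} (hs : ∀ e : S, IsIdempotentElem e → s * e = e * s) :
    munnCon S s (star s * s) := fun e he => by
  have hc := ((isIdempotentElem_star_mul_self s).commute he).eq
  calc star s * e * s = star s * s * e := by rw [mul_assoc, ← hs e he, mul_assoc]
    _ = star (star s * s) * e * (star s * s) := by
        rw [(isIdempotentElem_star_mul_self s).star_eq, hc, mul_assoc,
          (isIdempotentElem_star_mul_self s).eq]

theorem fundamental_iff_munnCon_eq_bot : Fundamental S ↔ munnCon S = ⊥ := by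
  refine ⟨fun hF => Con.ext fun a b => ⟨eq_of_munnCon hF, fun h => h ▸ (munnCon S).refl a⟩,
    fun h s hs => ?_⟩
  have hs' : s = star s * s := by
    have := munnCon_star_mul_self hs
    rwa [h] at this
  rw [hs']
  exact isIdempotentElem_star_mul_self s

theorem con_bot_ne_top {s : S} (hs : s ≠ 0) : (⊥ : Con S) ≠ ⊤ := fun h =>
  hs (show (⊥ : Con S) s 0 by rw [h]; trivial)

theorem eq_top_of_rel_zero (hS : ZeroSimple S) (c : Con S) {s : S} (hs : s ≠ 0) (h : c s 0) :
    c = ⊤ := by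
  have hzero (t : S) : c t 0 := by
    obtain ⟨a, b, rfl⟩ := hS.2 s hs t
    simpa only [mul_zero, zero_mul] using c.mul (c.mul (c.refl a) h) (c.refl b)
  exact eq_top_iff.2 fun a b _ => c.trans (hzero a) (c.symm (hzero b))

theorem eq_top_of_rel_of_mul_eq (hS : ZeroSimple S) (hD : ZeroDisjunctive S) (c : Con S)
    {e f : S} (he : IsIdempotentElem e) (hf : IsIdempotentElem f) (hef : e * f = f) (hne : f ≠ e)
    (h : c e f) : c = ⊤ := by
  by_cases hf0 : f = 0
  · subst hf0
    exact eq_top_of_rel_zero hS c hne.symm h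
  obtain ⟨g, hg0, hg, hge, hfg⟩ := hD e f he hf hf0 ((natLe_iff_mul_eq hf).2 hef) hne
  have hcg : c (e * g) (f * g) := c.mul h (c.refl g)
  rw [(natLe_iff_mul_eq hg).1 hge, hfg] at hcg
  exact eq_top_of_rel_zero hS c hg0 hcg

theorem eq_top_of_rel_of_isIdempotentElem (hS : ZeroSimple S) (hD : ZeroDisjunctive S)
    (c : Con S) {e f : S} (he : IsIdempotentElem e) (hf : IsIdempotentElem f) (hne : e ≠ f)
    (h : c e f) : c = ⊤ := by
  have hc := (he.commute hf).eq
  by_cases hef : e * f = e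
  · have hfe : f * (e * f) = e * f := by rw [← mul_assoc, ← hc, mul_assoc, hf.eq]
    refine eq_top_of_rel_of_mul_eq hS hD c hf (isIdempotentElem_mul he hf) hfe
      (fun h => hne (hef.symm.trans h)) ?_
    simpa only [hf.eq, hc] using c.mul (c.refl f) (c.symm h)
  · have hee : e * (e * f) = e * f := he.mul_self_mul f
    refine eq_top_of_rel_of_mul_eq hS hD c he (isIdempotentElem_mul he hf) hee hef ?_
    simpa only [he.eq] using c.mul (c.refl e) h

theorem eq_top_of_ne_bot (hF : Fundamental S) (hS : ZeroSimple S) (hD : ZeroDisjunctive S)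
    (c : Con S) (hc : c ≠ ⊥) : c = ⊤ := by
  obtain ⟨a, b, hab, hne⟩ : ∃ a b, c a b ∧ a ≠ b := by
    by_contra! h
    exact hc (Con.ext fun a b => ⟨h a b, fun hab => hab ▸ c.refl a⟩)
  obtain ⟨e, he, hconj⟩ : ∃ e, IsIdempotentElem e ∧ star a * e * a ≠ star b * e * b := by
    by_contra! h
    exact hne (eq_of_munnCon hF h)
  exact eq_top_of_rel_of_isIdempotentElem hS hD c (he.conj a) (he.conj b) hconj
    (c.mul (c.mul (c.star hab) (c.refl e)) hab)

theorem syntacticCon_zero_ne_top {s : S} (hs : s ≠ 0) : syntacticCon ({0} : Set S) ≠ ⊤ := by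
  intro h
  have : syntacticCon ({0} : Set S) s 0 := h ▸ trivial
  have := (this (s * star s) (star s * s)).2 (by rw [mul_zero, zero_mul]; rfl)
  rw [mul_star_mul_self, ← mul_assoc, mul_star_mul_self] at this
  exact hs this

theorem syntacticCon_zero_rel {e f : S} (he : IsIdempotentElem e) (hf : IsIdempotentElem f)
    (h : ∀ m : S, IsIdempotentElem m → (e * m = 0 ↔ f * m = 0)) :
    syntacticCon ({0} : Set S) e f := fun x y => by
  simpa only [Set.mem_singleton_iff, mul_mul_eq_zero_iff he, mul_mul_eq_zero_iff hf] using
    h _ (isIdempotentElem_mul (isIdempotentElem_star_mul_self x) (isIdempotentElem_mul_star_self y))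

section IsSimpleOrder

variable [IsSimpleOrder (Con S)]

theorem exists_ne_zero_of_isSimpleOrder : ∃ s : S, s ≠ 0 := by
  by_contra! h
  exact bot_ne_top (Con.ext fun a b => iff_of_true ((h a).trans (h b).symm) trivial)

theorem fundamental_of_isSimpleOrder : Fundamental S := by
  obtain ⟨s, hs⟩ := exists_ne_zero_of_isSimpleOrder (S := S)
  exact fundamental_iff_munnCon_eq_bot.2 ((eq_bot_or_eq_top _).resolve_right (munnCon_ne_top hs))

theorem zeroSimple_of_isSimpleOrder : ZeroSimple S := by
  refine ⟨exists_ne_zero_of_isSimpleOrder, fun s hs t => ?_⟩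
  let I : Set S := {t | ∃ a b, a * s * b = t}
  have hzero : (0 : S) ∈ I := ⟨0, 0, by rw [zero_mul, zero_mul]⟩
  have hself : s ∈ I :=
    ⟨s * star s, star s * s, by rw [mul_star_mul_self, ← mul_assoc, mul_star_mul_self]⟩
  let rees := reesCon I (fun x _ ⟨a, b, h⟩ => ⟨x * a, b, by rw [← h]; simp only [mul_assoc]⟩)
    (fun _ y ⟨a, b, h⟩ => ⟨a, b * y, by rw [← h]; simp only [mul_assoc]⟩)
  rcases eq_bot_or_eq_top rees with h | h
  · have : rees s 0 := Or.inr ⟨hself, hzero⟩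
    rw [h] at this
    exact absurd this hs
  · have : rees t 0 := h ▸ trivial
    rcases this with rfl | ⟨ht, -⟩
    exacts [hzero, ht]

theorem zeroDisjunctive_of_isSimpleOrder : ZeroDisjunctive S := by
  intro e f he hf hf0 hfe hne
  by_contra! hdisj
  rw [natLe_iff_mul_eq hf] at hfe
  have hann (m : S) (hm : IsIdempotentElem m) : e * m = 0 ↔ f * m = 0 := by
    refine ⟨fun h => ?_, fun h => ?_⟩
    · rw [← hfe, (he.commute hf).eq, mul_assoc, h, mul_zero]
    by_contra hem
    exact hdisj (e * m) hem (isIdempotentElem_mul he hm)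
      ((natLe_iff_mul_eq (isIdempotentElem_mul he hm)).2 (he.mul_self_mul m))
      (by rw [← mul_assoc, ← (he.commute hf).eq, hfe, h])
  have hsyn := (eq_bot_or_eq_top _).resolve_right (syntacticCon_zero_ne_top hf0)
  have hef : syntacticCon ({0} : Set S) e f := syntacticCon_zero_rel he hf hann
  rw [hsyn] at hef
  exact hne hef.symm

end IsSimpleOrder

theorem congruenceFree_iff_isSimpleOrder : CongruenceFree S ↔ IsSimpleOrder (Con S) := by
  constructor
  · rintro ⟨⟨s, hs⟩, hCF⟩
    refine { exists_pair_ne := ⟨⊥, ⊤, con_bot_ne_top hs⟩, eq_bot_or_eq_top := fun c => ?_ }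
    exact (hCF c c.iseqv fun _ _ _ _ => c.mul).imp Con.ext fun h =>
      eq_top_iff.2 fun a b _ => h a b
  · intro _
    refine ⟨exists_ne_zero_of_isSimpleOrder, fun r hr hm => ?_⟩
    let c : Con S := ⟨⟨r, hr⟩, hm _ _ _ _⟩
    exact (eq_bot_or_eq_top c).imp (fun h a b => Con.ext_iff.1 h a b) fun h a b =>
      show c a b by rw [h]; trivial

end InverseSemigroup0

open InverseSemigroup0

/-- An inverse semigroup with zero is congruence-free iff it is fundamental,
0-simple, and its semilattice of idempotents is 0-disjunctive. -/
theorem stmt2 (S : Type*) [InverseSemigroup0 S] :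
    CongruenceFree S ↔ Fundamental S ∧ ZeroSimple S ∧ ZeroDisjunctive S := by
  rw [congruenceFree_iff_isSimpleOrder]
  refine ⟨fun _ => ⟨fundamental_of_isSimpleOrder, zeroSimple_of_isSimpleOrder,
    zeroDisjunctive_of_isSimpleOrder⟩, fun ⟨hF, hS, hD⟩ => ?_⟩
  obtain ⟨s, hs⟩ := hS.1
  exact { exists_pair_ne := ⟨⊥, ⊤, con_bot_ne_top hs⟩
          eq_bot_or_eq_top := fun c => or_iff_not_imp_left.2 (eq_top_of_ne_bot hF hS hD c) }
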